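/- arXiv:2603.26597 — 3 statements merged into one kernel-verified Lean document; each statement's English description precedes it below -/
import Mathlib

section
/- Let d be a positive integer, U a d×d real orthogonal matrix (UᵀU = I), σ₁,…,σ_d ≥ 0, and λ > 0. Set Σ = U·diag(σ₁,…,σ_d)·Uᵀ and define the objective M(W) = (1/2)·Tr(WᵀWΣ) + (λ/2)·‖WWᵀ − I‖_F². Define μᵢ* = 0 if σᵢ ≥ 2λ and μᵢ* = √(1 − σᵢ/(2λ)) if σᵢ ≤ 2λ, and let W* = U·diag(μ₁*,…,μ_d*)·Uᵀ. Then for every choice of nonnegative reals μ₁,…,μ_d, the matrix W = U·diag(μ₁,…,μ_d)·Uᵀ satisfies M(W*) ≤ M(W). -/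
open Matrix

/-- Theorem 1 (linear case): the soft-thresholded eigenvalues give the optimal
linear projection for the combined objective
`M(W) = (1/2)·Tr(WᵀWΣ) + (λ/2)·‖WWᵀ − I‖_F²`. -/
theorem stmt0 (d : ℕ) (hd : 0 < d)
    (U : Matrix (Fin d) (Fin d) ℝ) (hU : Uᵀ * U = 1)
    (σ : Fin d → ℝ) (hσ : ∀ i, 0 ≤ σ i)
    (l : ℝ) (hl : 0 < l) :
    ∀ μ : Fin d → ℝ, (∀ i, 0 ≤ μ i) →
      (fun W : Matrix (Fin d) (Fin d) ℝ =>
          (1/2) * trace (Wᵀ * W * (U * diagonal σ * Uᵀ)) +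
            (l/2) * trace ((W * Wᵀ - 1) * (W * Wᵀ - 1)ᵀ))
        (U * diagonal (fun i =>
            if 2 * l ≤ σ i then 0 else Real.sqrt (1 - σ i / (2 * l))) * Uᵀ)
      ≤ (fun W : Matrix (Fin d) (Fin d) ℝ =>
          (1/2) * trace (Wᵀ * W * (U * diagonal σ * Uᵀ)) +
            (l/2) * trace ((W * Wᵀ - 1) * (W * Wᵀ - 1)ᵀ))
        (U * diagonal μ * Uᵀ) := by
  intro μ hμ
  simp only
  have hU' : U * Uᵀ = 1 := mul_eq_one_comm.mp hU
  have hconjmul : ∀ A B : Matrix (Fin d) (Fin d) ℝ,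
      (U * A * Uᵀ) * (U * B * Uᵀ) = U * (A * B) * Uᵀ := by
    intro A B
    calc (U * A * Uᵀ) * (U * B * Uᵀ) = U * (A * ((Uᵀ * U) * B)) * Uᵀ := by
          simp [Matrix.mul_assoc]
      _ = U * (A * B) * Uᵀ := by rw [hU, Matrix.one_mul]
  have htr : ∀ X : Matrix (Fin d) (Fin d) ℝ, trace (U * X * Uᵀ) = trace X := by
    intro X
    rw [Matrix.trace_mul_cycle, hU, Matrix.one_mul]
  have key : ∀ f : Fin d → ℝ,
      trace ((U * diagonal f * Uᵀ)ᵀ * (U * diagonal f * Uᵀ) * (U * diagonal σ * Uᵀ))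
        = ∑ i, f i ^ 2 * σ i ∧
      trace (((U * diagonal f * Uᵀ) * (U * diagonal f * Uᵀ)ᵀ - 1) *
             ((U * diagonal f * Uᵀ) * (U * diagonal f * Uᵀ)ᵀ - 1)ᵀ)
        = ∑ i, (f i ^ 2 - 1) ^ 2 := by
    intro f
    have hWT : (U * diagonal f * Uᵀ)ᵀ = U * diagonal f * Uᵀ := by
      simp [Matrix.transpose_mul, Matrix.mul_assoc]
    have hsub : (U * diagonal f * Uᵀ) * (U * diagonal f * Uᵀ)ᵀ - 1
        = U * (diagonal f * diagonal f - 1) * Uᵀ := by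
      rw [hWT, hconjmul, Matrix.mul_sub, Matrix.sub_mul, Matrix.mul_one, hU']
    have hsym : (U * (diagonal f * diagonal f - 1) * Uᵀ)ᵀ
        = U * (diagonal f * diagonal f - 1) * Uᵀ := by
      simp [Matrix.transpose_mul, Matrix.transpose_sub, Matrix.mul_assoc,
        Matrix.diagonal_transpose]
    constructor
    · rw [hWT, hconjmul, hconjmul, htr]
      simp [Matrix.diagonal_mul_diagonal, Matrix.trace_diagonal]
      congr 1; ext i; ring
    · rw [hsub, hsym, hconjmul, htr]
      have : (diagonal f * diagonal f - 1 : Matrix (Fin d) (Fin d) ℝ)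
          = diagonal (fun i => f i * f i - 1) := by
        rw [Matrix.diagonal_mul_diagonal, ← Matrix.diagonal_one, Matrix.diagonal_sub]
      rw [this, Matrix.diagonal_mul_diagonal, Matrix.trace_diagonal]
      congr 1; ext i; ring
  set ν : Fin d → ℝ := fun i => if 2 * l ≤ σ i then 0 else Real.sqrt (1 - σ i / (2 * l))
    with hν
  rw [(key ν).1, (key ν).2, (key μ).1, (key μ).2, Finset.mul_sum, Finset.mul_sum,
    Finset.mul_sum, Finset.mul_sum, ← Finset.sum_add_distrib, ← Finset.sum_add_distrib]
  apply Finset.sum_le_sum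
  intro i _
  by_cases h : 2 * l ≤ σ i
  · have hνi : ν i = 0 := by simp [hν, h]
    rw [hνi]
    nlinarith [sq_nonneg (μ i), sq_nonneg (μ i ^ 2),
      mul_nonneg (sq_nonneg (μ i)) (sub_nonneg.mpr h), hl.le]
  · have hlt : σ i < 2 * l := lt_of_not_ge h
    have hνi : ν i = Real.sqrt (1 - σ i / (2 * l)) := by simp [hν, h]
    have harg : (0:ℝ) ≤ 1 - σ i / (2 * l) := by
      have : σ i / (2 * l) ≤ 1 := by
        rw [div_le_one (by linarith)]; linarith
      linarith
    have hv2 : ν i ^ 2 = 1 - σ i / (2 * l) := by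
      rw [hνi, Real.sq_sqrt harg]
    have e : 2 * l * (ν i ^ 2) = 2 * l - σ i := by
      rw [hv2]; field_simp
    nlinarith [sq_nonneg (μ i ^ 2 - ν i ^ 2), hl.le,
      mul_nonneg hl.le (sq_nonneg (μ i ^ 2 - ν i ^ 2))]
end

section
/- Let σ ≥ 0 and λ > 0 be real numbers and define F(μ₁, μ₂) = (1/2)μ₁²μ₂²σ + (λ/2)(μ₁²μ₂² − 1)² for (μ₁, μ₂) ∈ ℝ². If σ ≥ 2λ, then any pair with μ₁μ₂ = 0 is a global minimizer of F. If σ ≤ 2λ, then any pair with (μ₁μ₂)² = 1 − σ/(2λ) is a global minimizer of F. In particular the eigenvalue product at the optimum satisfies μ₁*·μ₂* = 0 when σ > 2λ and (μ₁*·μ₂*)² = 1 − σ/(2λ) when σ ≤ 2λ. -/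
lemma key1 (σ l y : ℝ) (hy : 0 ≤ y) (h : 2 * l ≤ σ) (hl : 0 < l) :
    (1/2) * 0 * σ + (l/2) * (0 - 1) ^ 2 ≤ (1/2) * y * σ + (l/2) * (y - 1) ^ 2 := by
  nlinarith [mul_nonneg hy (sub_nonneg.2 h), mul_nonneg hl.le (sq_nonneg y)]

lemma key2 (σ l x y : ℝ) (hl : 0 < l) (hx : x = 1 - σ / (2 * l)) :
    (1/2) * x * σ + (l/2) * (x - 1) ^ 2 ≤ (1/2) * y * σ + (l/2) * (y - 1) ^ 2 := by
  have hid : (1/2) * y * σ + (l/2) * (y - 1) ^ 2 - ((1/2) * x * σ + (l/2) * (x - 1) ^ 2)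
      = (l/2) * (y - x) ^ 2 := by
    subst hx; field_simp; ring
  nlinarith [mul_nonneg hl.le (sq_nonneg (y - x))]

/-- Theorem 1 (MLP case): for
`F(μ₁, μ₂) = (1/2)μ₁²μ₂²σ + (λ/2)(μ₁²μ₂² − 1)²`, if `σ ≥ 2λ` every pair with
`μ₁μ₂ = 0` is a global minimizer, and if `σ ≤ 2λ` every pair with
`(μ₁μ₂)² = 1 − σ/(2λ)` is a global minimizer. -/
theorem stmt12 (σ l : ℝ) (hσ : 0 ≤ σ) (hl : 0 < l) :
    (2 * l ≤ σ →
      ∀ μ₁ μ₂ : ℝ, μ₁ * μ₂ = 0 →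
        ∀ ν₁ ν₂ : ℝ,
          (1/2) * μ₁ ^ 2 * μ₂ ^ 2 * σ + (l/2) * (μ₁ ^ 2 * μ₂ ^ 2 - 1) ^ 2
            ≤ (1/2) * ν₁ ^ 2 * ν₂ ^ 2 * σ + (l/2) * (ν₁ ^ 2 * ν₂ ^ 2 - 1) ^ 2) ∧
    (σ ≤ 2 * l →
      ∀ μ₁ μ₂ : ℝ, (μ₁ * μ₂) ^ 2 = 1 - σ / (2 * l) →
        ∀ ν₁ ν₂ : ℝ,
          (1/2) * μ₁ ^ 2 * μ₂ ^ 2 * σ + (l/2) * (μ₁ ^ 2 * μ₂ ^ 2 - 1) ^ 2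
            ≤ (1/2) * ν₁ ^ 2 * ν₂ ^ 2 * σ + (l/2) * (ν₁ ^ 2 * ν₂ ^ 2 - 1) ^ 2) := by
  constructor
  · intro h μ₁ μ₂ hμ ν₁ ν₂
    have hx : μ₁ ^ 2 * μ₂ ^ 2 = 0 := by nlinarith [sq_nonneg (μ₁ * μ₂)]
    have h1 := key1 σ l (ν₁ ^ 2 * ν₂ ^ 2) (by positivity) h hl
    have h2 : (1/2) * μ₁ ^ 2 * μ₂ ^ 2 * σ = (1/2) * (μ₁ ^ 2 * μ₂ ^ 2) * σ := by ring
    rw [h2, hx]; linarith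
  · intro h μ₁ μ₂ hμ ν₁ ν₂
    have hx : μ₁ ^ 2 * μ₂ ^ 2 = 1 - σ / (2 * l) := by nlinarith [sq_nonneg (μ₁ * μ₂)]
    have h1 := key2 σ l (μ₁ ^ 2 * μ₂ ^ 2) (ν₁ ^ 2 * ν₂ ^ 2) hl hx
    have h2 : (1/2) * μ₁ ^ 2 * μ₂ ^ 2 * σ = (1/2) * (μ₁ ^ 2 * μ₂ ^ 2) * σ := by ring
    have h3 : (1/2) * ν₁ ^ 2 * ν₂ ^ 2 * σ = (1/2) * (ν₁ ^ 2 * ν₂ ^ 2) * σ := by ring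
    rw [h2, h3]; linarith
end

section
/- Let d be a positive integer, σ₁,…,σ_d ≥ 0 real numbers, τ = (1/d)·Σᵢ σᵢ, and λ a real number with 0 < 2λ < τ. For each i set μᵢ² = 1 − σᵢ/(2λ) if σᵢ ≤ 2λ and μᵢ = 0 otherwise. Then the margin improvement Δ = Σᵢ μᵢ²(τ − σᵢ) equals Σ_{i : σᵢ ≤ 2λ} (τ − σᵢ)(1 − σᵢ/(2λ)), satisfies Δ ≥ 0, and is strictly positive whenever there exists an index i with σᵢ < 2λ. -/
/-- Theorem 2 (Trade-off Improvement): under the optimal projection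
eigenvalues, the margin improvement `Δ = Σᵢ μᵢ²(τ − σᵢ)` equals
`Σ_{σᵢ ≤ 2λ} (τ − σᵢ)(1 − σᵢ/(2λ))`, is nonnegative, and is strictly positive
whenever some `σᵢ < 2λ`. -/
theorem stmt17 (d : ℕ) (hd : 0 < d) (σ : Fin d → ℝ) (hσ : ∀ i, 0 ≤ σ i)
    (τ : ℝ) (hτ : τ = (1 / d) * ∑ i, σ i)
    (l : ℝ) (hl0 : 0 < l) (hlτ : 2 * l < τ)
    (μ : Fin d → ℝ)
    (hμ : ∀ i, (σ i ≤ 2 * l → (μ i) ^ 2 = 1 - σ i / (2 * l)) ∧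
               (¬ σ i ≤ 2 * l → μ i = 0)) :
    (∑ i, (μ i) ^ 2 * (τ - σ i))
      = (∑ i ∈ Finset.univ.filter (fun i => σ i ≤ 2 * l),
          (τ - σ i) * (1 - σ i / (2 * l))) ∧
    0 ≤ ∑ i, (μ i) ^ 2 * (τ - σ i) ∧
    ((∃ i, σ i < 2 * l) → 0 < ∑ i, (μ i) ^ 2 * (τ - σ i)) := by
  have hterm : ∀ i, (μ i) ^ 2 * (τ - σ i)
      = if σ i ≤ 2 * l then (τ - σ i) * (1 - σ i / (2 * l)) else 0 := by
    intro i
    by_cases h : σ i ≤ 2 * l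
    · rw [if_pos h, (hμ i).1 h]; ring
    · simp [h, (hμ i).2 h]
  have hpos : ∀ i, σ i ≤ 2 * l → 0 ≤ (τ - σ i) * (1 - σ i / (2 * l)) := by
    intro i h
    apply mul_nonneg
    · linarith
    · have h2l : 0 < 2 * l := by linarith
      have := (div_le_one h2l).2 h
      linarith
  have hnn : ∀ i, 0 ≤ (μ i) ^ 2 * (τ - σ i) := by
    intro i
    rw [hterm i]
    by_cases h : σ i ≤ 2 * l
    · simpa [h] using hpos i h
    · simp [h]
  refine ⟨?_, Finset.sum_nonneg fun i _ => hnn i, ?_⟩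
  · rw [Finset.sum_congr rfl fun i _ => hterm i, Finset.sum_ite, Finset.sum_const_zero,
      add_zero]
  · rintro ⟨i, hi⟩
    apply Finset.sum_pos' (fun j _ => hnn j) ⟨i, Finset.mem_univ i, ?_⟩
    rw [hterm i, if_pos (le_of_lt hi)]
    apply mul_pos
    · linarith
    · have h2l : 0 < 2 * l := by linarith
      have := (div_lt_one h2l).2 hi
      linarith
end
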